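/- For all integers k ≥ 3 and 2 ≤ d ≤ k−1, the two explicit rational expressions P_k(V(d) finite) and P_k(V(d) infinite) for quadrangulations sum to 1: with f₃(k) = 4(k²+2k−1)(5k⁴+20k³+27k²+14k+4)/(35k(k+1)(k+2)), one has (1/f₃(k))·[h₃(k−d,2d+3) − h₃(k−d,2d+1) + h̃₃(k−d,d) − h̃₃(k−d,d−1)] = 1, where h̃₃(k,d) = (d−1)(d+1)(d+2)(d+4)(15d⁴+90d³+237d²+306d+140)(2d+2k+3)/(105(2d+3)(d+k+1)²(d+k+2)²) and h₃(k,Y) is the explicit rational function h₃(k,Y) = k/(840Y((2k+Y)²−1)²)·(105(k+Y)⁸ + 420(k²−3)(k+Y)⁶ − 210(k⁴+6k²+49)(k+Y)⁴ − 4(75k⁶−567k⁴−1715k²−2273)(k+Y)² − (k−5)(k−1)(k+1)(k+5)(15k⁴+138k²−217)). -/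
import Mathlib


/-- Singularity amplitude `h₃(k, Y)` of `H(k, x, T)` at order `(1 - 12g)^{3/2}`. -/
noncomputable def h3 (k Y : ℝ) : ℝ :=
  k / (840 * Y * ((2 * k + Y) ^ 2 - 1) ^ 2) *
    (105 * (k + Y) ^ 8 + 420 * (k ^ 2 - 3) * (k + Y) ^ 6
      - 210 * (k ^ 4 + 6 * k ^ 2 + 49) * (k + Y) ^ 4
      - 4 * (75 * k ^ 6 - 567 * k ^ 4 - 1715 * k ^ 2 - 2273) * (k + Y) ^ 2
      - (k - 5) * (k - 1) * (k + 1) * (k + 5) * (15 * k ^ 4 + 138 * k ^ 2 - 217))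

/-- Singularity amplitude `h̃₃(k, d)` in the variable `h`. -/
noncomputable def htilde3 (k d : ℝ) : ℝ :=
  (d - 1) * (d + 1) * (d + 2) * (d + 4) *
      (15 * d ^ 4 + 90 * d ^ 3 + 237 * d ^ 2 + 306 * d + 140) * (2 * d + 2 * k + 3) /
    (105 * (2 * d + 3) * (d + k + 1) ^ 2 * (d + k + 2) ^ 2)

/-- Singularity amplitude `f₃(k)` of the generating function `F(k, g)`. -/
noncomputable def f3 (k : ℝ) : ℝ :=
  4 * (k ^ 2 + 2 * k - 1) * (5 * k ^ 4 + 20 * k ^ 3 + 27 * k ^ 2 + 14 * k + 4) /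
    (35 * k * (k + 1) * (k + 2))

set_option maxHeartbeats 4000000 in
theorem out_in_probabilities_sum_to_one (k d : ℕ) (hk : 3 ≤ k) (hd : 2 ≤ d)
    (hdk : d ≤ k - 1) :
    (1 / f3 k) *
      (h3 ((k : ℝ) - d) (2 * d + 3) - h3 ((k : ℝ) - d) (2 * d + 1)
        + htilde3 ((k : ℝ) - d) d - htilde3 ((k : ℝ) - d) ((d : ℝ) - 1)) = 1 := by
  have hK : (3 : ℝ) ≤ (k : ℝ) := by exact_mod_cast hk
  have hD : (2 : ℝ) ≤ (d : ℝ) := by exact_mod_cast hd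
  set K : ℝ := (k : ℝ) with hKdef
  set D : ℝ := (d : ℝ) with hDdef
  have hKpos : (0 : ℝ) < K := by linarith
  have hK1 : K + 1 ≠ 0 := by positivity
  have hK2 : K + 2 ≠ 0 := by positivity
  have hKne : K ≠ 0 := ne_of_gt hKpos
  have hDpos : (0 : ℝ) < D := by linarith
  have h2D3 : 2 * D + 3 ≠ 0 := by positivity
  have h2D1 : 2 * D + 1 ≠ 0 := by positivity
  have hq1 : K ^ 2 + 2 * K - 1 ≠ 0 := by nlinarith
  have hq2 : 5 * K ^ 4 + 20 * K ^ 3 + 27 * K ^ 2 + 14 * K + 4 ≠ 0 := by positivity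
  have hden1 : (13440 : ℝ) * (2 * D + 3) * (K + 1) ^ 2 * (K + 2) ^ 2 ≠ 0 := by
    have h1 : (0:ℝ) < 2 * D + 3 := by linarith
    have h2 : (0:ℝ) < K + 1 := by linarith
    have h3 : (0:ℝ) < K + 2 := by linarith
    positivity
  have hden2 : (13440 : ℝ) * (2 * D + 1) * K ^ 2 * (K + 1) ^ 2 ≠ 0 := by
    have h1 : (0:ℝ) < 2 * D + 1 := by linarith
    have h2 : (0:ℝ) < K + 1 := by linarith
    positivity
  have hden3 : (105 : ℝ) * (2 * D + 3) * (K + 1) ^ 2 * (K + 2) ^ 2 ≠ 0 := by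
    have h1 : (0:ℝ) < 2 * D + 3 := by linarith
    have h2 : (0:ℝ) < K + 1 := by linarith
    have h3 : (0:ℝ) < K + 2 := by linarith
    positivity
  have hden4 : (105 : ℝ) * (2 * D + 1) * K ^ 2 * (K + 1) ^ 2 ≠ 0 := by
    have h1 : (0:ℝ) < 2 * D + 1 := by linarith
    have h2 : (0:ℝ) < K + 1 := by linarith
    positivity
  have hd1 : 840 * (2 * D + 3) * ((2 * (K - D) + (2 * D + 3)) ^ 2 - 1) ^ 2 ≠ 0 := by
    have : 840 * (2 * D + 3) * ((2 * (K - D) + (2 * D + 3)) ^ 2 - 1) ^ 2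
        = 13440 * (2 * D + 3) * (K + 1) ^ 2 * (K + 2) ^ 2 := by ring
    rw [this]
    exact hden1
  have hd2 : 840 * (2 * D + 1) * ((2 * (K - D) + (2 * D + 1)) ^ 2 - 1) ^ 2 ≠ 0 := by
    have : 840 * (2 * D + 1) * ((2 * (K - D) + (2 * D + 1)) ^ 2 - 1) ^ 2
        = 13440 * (2 * D + 1) * K ^ 2 * (K + 1) ^ 2 := by ring
    rw [this]
    exact hden2
  have hd3 : 105 * (2 * D + 3) * (D + (K - D) + 1) ^ 2 * (D + (K - D) + 2) ^ 2 ≠ 0 := by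
    have : 105 * (2 * D + 3) * (D + (K - D) + 1) ^ 2 * (D + (K - D) + 2) ^ 2
        = 105 * (2 * D + 3) * (K + 1) ^ 2 * (K + 2) ^ 2 := by ring
    rw [this]; exact hden3
  have hd4 : 105 * (2 * (D - 1) + 3) * (D - 1 + (K - D) + 1) ^ 2 * (D - 1 + (K - D) + 2) ^ 2 ≠ 0 := by
    have : 105 * (2 * (D - 1) + 3) * (D - 1 + (K - D) + 1) ^ 2 * (D - 1 + (K - D) + 2) ^ 2
        = 105 * (2 * D + 1) * K ^ 2 * (K + 1) ^ 2 := by ring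
    rw [this]; exact hden4
  have e1 : h3 (K - D) (2 * D + 3)
      = (K - D) * (105 * (K + D + 3) ^ 8 + 420 * ((K - D) ^ 2 - 3) * (K + D + 3) ^ 6
          - 210 * ((K - D) ^ 4 + 6 * (K - D) ^ 2 + 49) * (K + D + 3) ^ 4
          - 4 * (75 * (K - D) ^ 6 - 567 * (K - D) ^ 4 - 1715 * (K - D) ^ 2 - 2273) * (K + D + 3) ^ 2
          - (K - D - 5) * (K - D - 1) * (K - D + 1) * (K - D + 5)
              * (15 * (K - D) ^ 4 + 138 * (K - D) ^ 2 - 217))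
        / (13440 * (2 * D + 3) * (K + 1) ^ 2 * (K + 2) ^ 2) := by
    unfold h3
    rw [div_mul_eq_mul_div, div_eq_div_iff hd1 hden1]
    ring
  have e2 : h3 (K - D) (2 * D + 1)
      = (K - D) * (105 * (K + D + 1) ^ 8 + 420 * ((K - D) ^ 2 - 3) * (K + D + 1) ^ 6
          - 210 * ((K - D) ^ 4 + 6 * (K - D) ^ 2 + 49) * (K + D + 1) ^ 4
          - 4 * (75 * (K - D) ^ 6 - 567 * (K - D) ^ 4 - 1715 * (K - D) ^ 2 - 2273) * (K + D + 1) ^ 2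
          - (K - D - 5) * (K - D - 1) * (K - D + 1) * (K - D + 5)
              * (15 * (K - D) ^ 4 + 138 * (K - D) ^ 2 - 217))
        / (13440 * (2 * D + 1) * K ^ 2 * (K + 1) ^ 2) := by
    unfold h3
    rw [div_mul_eq_mul_div, div_eq_div_iff hd2 hden2]
    ring
  have e3 : htilde3 (K - D) D
      = (D - 1) * (D + 1) * (D + 2) * (D + 4)
          * (15 * D ^ 4 + 90 * D ^ 3 + 237 * D ^ 2 + 306 * D + 140) * (2 * K + 3)
        / (105 * (2 * D + 3) * (K + 1) ^ 2 * (K + 2) ^ 2) := by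
    unfold htilde3
    rw [div_eq_div_iff hd3 hden3]
    ring
  have e4 : htilde3 (K - D) (D - 1)
      = (D - 2) * D * (D + 1) * (D + 3)
          * (15 * (D - 1) ^ 4 + 90 * (D - 1) ^ 3 + 237 * (D - 1) ^ 2 + 306 * (D - 1) + 140)
          * (2 * K + 1)
        / (105 * (2 * D + 1) * K ^ 2 * (K + 1) ^ 2) := by
    unfold htilde3
    rw [div_eq_div_iff hd4 hden4]
    ring
  rw [e1, e2, e3, e4]
  unfold f3
  rw [div_mul_eq_mul_div, one_mul, div_eq_one_iff_eq (by
    apply div_ne_zero _ (by positivity)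
    exact mul_ne_zero (mul_ne_zero (by norm_num) hq1) hq2)]
  rw [div_sub_div _ _ hden1 hden2, div_add_div _ _ (mul_ne_zero hden1 hden2) hden3,
    div_sub_div _ _ (mul_ne_zero (mul_ne_zero hden1 hden2) hden3) hden4]
  rw [div_eq_div_iff
    (mul_ne_zero (mul_ne_zero (mul_ne_zero hden1 hden2) hden3) hden4)
    (mul_ne_zero (mul_ne_zero (mul_ne_zero (by norm_num) hKne) hK1) hK2)]
  ring
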